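/- Let f, g, h be trajectories such that every pair among them overlaps and such that a_h ≤ a_f ≤ a_g and b_h ≤ b_f ≤ b_g. Then d_c(h,g) ≤ d_c(f,h) + d_c(f,g). -/

import Mathlib

open MeasureTheory Set

/-- The ℓ_p norm on ℝ^r. -/
noncomputable def lpNorm (r : ℕ) (p : ℝ) (x : Fin r → ℝ) : ℝ :=
  (∑ i, |x i| ^ p) ^ (1 / p)

/-- The ℓ_p distance between two trajectory segments aligned on [t₁, t₂]. -/
noncomputable def segDist (r : ℕ) (p : ℝ) (t₁ t₂ : ℝ) (f g : ℝ → Fin r → ℝ) : ℝ :=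
  ∫ t in t₁..t₂, lpNorm r p (fun i => f t i - g t i)

/-- A trajectory: a function ℝ → ℝ^r together with an interval [a, b] (a ≤ b)
on which it is continuous. -/
structure Traj (r : ℕ) where
  f : ℝ → Fin r → ℝ
  a : ℝ
  b : ℝ
  hab : a ≤ b
  cont : ContinuousOn f (Set.Icc a b)

/-- Two trajectories overlap if their time domains intersect. -/
def Overlap {r : ℕ} (F G : Traj r) : Prop := max F.a G.a ≤ min F.b G.b

/-- The pairwise spatio-temporal trajectory distance with segment cutoff
coefficient cS (equal FA and MD cutoffs). -/
noncomputable def dC (r : ℕ) (p cS : ℝ) (F G : Traj r) : ℝ :=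
  ((r : ℝ) * (cS * (|F.a - G.a| + |F.b - G.b|)) ^ p +
    min ((segDist r p (max F.a G.a) (min F.b G.b) F.f G.f) ^ p)
        ((r : ℝ) * (2 * cS * (min F.b G.b - max F.a G.a)) ^ p)) ^ (1 / p)

/- ### auxiliary lemmas -/

lemma lpNorm_nonneg (r : ℕ) (p : ℝ) (x : Fin r → ℝ) : 0 ≤ lpNorm r p x :=
  Real.rpow_nonneg (Finset.sum_nonneg fun i _ => Real.rpow_nonneg (abs_nonneg _) _) _

lemma lpNorm_sub_comm (r : ℕ) (p : ℝ) (x y : Fin r → ℝ) :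
    lpNorm r p (fun i => x i - y i) = lpNorm r p (fun i => y i - x i) := by
  simp [_root_.lpNorm, abs_sub_comm]

lemma lpNorm_triangle (r : ℕ) (p : ℝ) (hp : 1 ≤ p) (x y z : Fin r → ℝ) :
    lpNorm r p (fun i => x i - z i) ≤
      lpNorm r p (fun i => x i - y i) + lpNorm r p (fun i => y i - z i) := by
  have := Real.Lp_add_le (Finset.univ : Finset (Fin r))
    (fun i => x i - y i) (fun i => y i - z i) hp
  simpa [_root_.lpNorm, sub_add_sub_cancel] using this

lemma lpNorm_continuous (r : ℕ) (p : ℝ) (hp : 1 ≤ p) : Continuous (lpNorm r p) := by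
  have h0 : (0:ℝ) ≤ p := le_trans zero_le_one hp
  unfold _root_.lpNorm
  refine Continuous.rpow_const ?_ (fun x => Or.inr (by positivity))
  exact continuous_finset_sum _ fun i _ =>
    ((continuous_apply i).abs).rpow_const (fun x => Or.inr h0)

lemma diff_contOn {r : ℕ} {f g : ℝ → Fin r → ℝ} {s : Set ℝ}
    (hf : ContinuousOn f s) (hg : ContinuousOn g s) (p : ℝ) (hp : 1 ≤ p) :
    ContinuousOn (fun t => lpNorm r p (fun i => f t i - g t i)) s := by
  refine (lpNorm_continuous r p hp).comp_continuousOn ?_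
  exact continuousOn_pi.2 fun i =>
    (((continuous_apply i).comp_continuousOn hf).sub ((continuous_apply i).comp_continuousOn hg))

lemma integrable_diff {r : ℕ} {f g : ℝ → Fin r → ℝ} {a b : ℝ} (hab : a ≤ b)
    (hf : ContinuousOn f (Icc a b)) (hg : ContinuousOn g (Icc a b)) (p : ℝ) (hp : 1 ≤ p) :
    IntervalIntegrable (fun t => lpNorm r p (fun i => f t i - g t i)) volume a b := by
  apply ContinuousOn.intervalIntegrable
  rw [uIcc_of_le hab]
  exact diff_contOn hf hg p hp

lemma segDist_nonneg (r : ℕ) (p : ℝ) {t₁ t₂ : ℝ} (h : t₁ ≤ t₂) (f g : ℝ → Fin r → ℝ) :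
    0 ≤ segDist r p t₁ t₂ f g :=
  intervalIntegral.integral_nonneg h (fun t _ => lpNorm_nonneg _ _ _)

lemma two_point_minkowski (p : ℝ) (hp : 1 ≤ p) {a b c d e f : ℝ}
    (ha : 0 ≤ a) (hb : 0 ≤ b) (hc : 0 ≤ c) (hd : 0 ≤ d) (he : 0 ≤ e) (hf : 0 ≤ f)
    (h1 : a ≤ c + e) (h2 : b ≤ d + f) :
    (a ^ p + b ^ p) ^ (1 / p) ≤ (c ^ p + d ^ p) ^ (1 / p) + (e ^ p + f ^ p) ^ (1 / p) := by
  have hmink := Real.Lp_add_le (Finset.univ : Finset (Fin 2)) ![c, d] ![e, f] hp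
  simp only [Fin.sum_univ_two, Matrix.cons_val_zero, Matrix.cons_val_one, Matrix.head_cons,
    abs_of_nonneg hc, abs_of_nonneg hd, abs_of_nonneg he, abs_of_nonneg hf,
    abs_of_nonneg (add_nonneg hc he), abs_of_nonneg (add_nonneg hd hf)] at hmink
  refine le_trans ?_ hmink
  refine Real.rpow_le_rpow (by positivity) ?_ (by positivity)
  exact add_le_add (Real.rpow_le_rpow ha h1 (le_trans zero_le_one hp))
    (Real.rpow_le_rpow hb h2 (le_trans zero_le_one hp))

lemma root_pow (p : ℝ) (hp : 1 ≤ p) (r : ℕ) {x : ℝ} (hx : 0 ≤ x) :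
    ((r : ℝ) ^ (1/p) * x) ^ p = (r : ℝ) * x ^ p := by
  have hp0 : p ≠ 0 := by positivity
  rw [Real.mul_rpow (by positivity) hx, one_div,
    Real.rpow_inv_rpow (by positivity) hp0]

lemma min_rpow (p : ℝ) (hp : 1 ≤ p) {S D : ℝ} (hS : 0 ≤ S) (hD : 0 ≤ D) :
    min S D ^ p = min (S ^ p) (D ^ p) := by
  have h0 : (0:ℝ) ≤ p := le_trans zero_le_one hp
  rcases le_total S D with h | h
  · rw [min_eq_left h, min_eq_left (Real.rpow_le_rpow hS h h0)]
  · rw [min_eq_right h, min_eq_right (Real.rpow_le_rpow hD h h0)]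

/-- Triangle-type inequality for the pairwise trajectory distance under the
endpoint ordering of this case. -/
theorem dC_tri_case1_hg (r : ℕ) (hr : 1 ≤ r) (p : ℝ) (hp : 1 ≤ p)
    (cS : ℝ) (hcS : 0 < cS)
    (F G H : Traj r) (hFG : Overlap F G) (hFH : Overlap F H) (hHG : Overlap H G)
    (ha1 : H.a ≤ F.a) (ha2 : F.a ≤ G.a) (hb1 : H.b ≤ F.b) (hb2 : F.b ≤ G.b) :
    dC r p cS H G ≤ dC r p cS F H + dC r p cS F G := by
  have hp0 : (0:ℝ) < p := lt_of_lt_of_le one_pos hp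
  have hGaHb : G.a ≤ H.b := (le_max_right H.a G.a).trans (hHG.trans (min_le_left _ _))
  have hFaHb : F.a ≤ H.b := (le_max_left F.a H.a).trans (hFH.trans (min_le_right _ _))
  have hGaFb : G.a ≤ F.b := (le_max_right F.a G.a).trans (hFG.trans (min_le_left _ _))
  -- continuity on the relevant intervals
  have cH1 : ContinuousOn H.f (Icc G.a H.b) := H.cont.mono (Icc_subset_Icc (ha1.trans ha2) le_rfl)
  have cF1 : ContinuousOn F.f (Icc G.a H.b) := F.cont.mono (Icc_subset_Icc ha2 hb1)
  have cG1 : ContinuousOn G.f (Icc G.a H.b) := G.cont.mono (Icc_subset_Icc le_rfl (hb1.trans hb2))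
  have cH2 : ContinuousOn H.f (Icc F.a H.b) := H.cont.mono (Icc_subset_Icc ha1 le_rfl)
  have cF2 : ContinuousOn F.f (Icc F.a H.b) := F.cont.mono (Icc_subset_Icc le_rfl hb1)
  have cF3 : ContinuousOn F.f (Icc G.a F.b) := F.cont.mono (Icc_subset_Icc ha2 le_rfl)
  have cG3 : ContinuousOn G.f (Icc G.a F.b) := G.cont.mono (Icc_subset_Icc le_rfl hb2)
  -- integrability
  have iHF1 := integrable_diff hGaHb cH1 cF1 p hp
  have iFG1 := integrable_diff hGaHb cF1 cG1 p hp
  have iHG1 := integrable_diff hGaHb cH1 cG1 p hp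
  have iHF2 := integrable_diff hFaHb cH2 cF2 p hp
  have iFG3 := integrable_diff hGaFb cF3 cG3 p hp
  have sub1 : uIcc F.a G.a ⊆ uIcc F.a H.b := by
    rw [uIcc_of_le ha2, uIcc_of_le hFaHb]; exact Icc_subset_Icc le_rfl hGaHb
  have sub2 : uIcc H.b F.b ⊆ uIcc G.a F.b := by
    rw [uIcc_of_le hb1, uIcc_of_le hGaFb]; exact Icc_subset_Icc hGaHb le_rfl
  have sub3 : uIcc G.a H.b ⊆ uIcc F.a H.b := by
    rw [uIcc_of_le hGaHb, uIcc_of_le hFaHb]; exact Icc_subset_Icc ha2 le_rfl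
  have sub4 : uIcc G.a H.b ⊆ uIcc G.a F.b := by
    rw [uIcc_of_le hGaHb, uIcc_of_le hGaFb]; exact Icc_subset_Icc le_rfl hb1
  have iHF2a : IntervalIntegrable (fun t => lpNorm r p (fun i => H.f t i - F.f t i))
      volume F.a G.a := iHF2.mono_set sub1
  have iFG3a : IntervalIntegrable (fun t => lpNorm r p (fun i => F.f t i - G.f t i))
      volume H.b F.b := iFG3.mono_set sub2
  -- the key integral inequality  S1 ≤ S2 + S3
  set S1 := segDist r p G.a H.b H.f G.f with hS1
  set S2 := segDist r p F.a H.b F.f H.f with hS2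
  set S3 := segDist r p G.a F.b F.f G.f with hS3
  have hS1nn : 0 ≤ S1 := segDist_nonneg r p hGaHb _ _
  have hS2nn : 0 ≤ S2 := segDist_nonneg r p hFaHb _ _
  have hS3nn : 0 ≤ S3 := segDist_nonneg r p hGaFb _ _
  have key : S1 ≤ S2 + S3 := by
    have step1 : S1 ≤ (∫ t in G.a..H.b, lpNorm r p (fun i => H.f t i - F.f t i)) +
        ∫ t in G.a..H.b, lpNorm r p (fun i => F.f t i - G.f t i) := by
      rw [← intervalIntegral.integral_add iHF1 iFG1]
      exact intervalIntegral.integral_mono_on hGaHb iHG1 (iHF1.add iFG1)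
        (fun t _ => lpNorm_triangle r p hp _ (F.f t) _)
    have step2 : (∫ t in G.a..H.b, lpNorm r p (fun i => H.f t i - F.f t i)) ≤ S2 := by
      have hsplit := intervalIntegral.integral_add_adjacent_intervals iHF2a
        (iHF2.mono_set sub3)
      have hnn : 0 ≤ ∫ t in F.a..G.a, lpNorm r p (fun i => H.f t i - F.f t i) :=
        intervalIntegral.integral_nonneg ha2 (fun t _ => lpNorm_nonneg _ _ _)
      have : S2 = ∫ t in F.a..H.b, lpNorm r p (fun i => H.f t i - F.f t i) := by
        rw [hS2]; unfold segDist
        congr 1; ext t; rw [lpNorm_sub_comm]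
      rw [this, ← hsplit]; linarith
    have step3 : (∫ t in G.a..H.b, lpNorm r p (fun i => F.f t i - G.f t i)) ≤ S3 := by
      have hsplit := intervalIntegral.integral_add_adjacent_intervals
        (iFG3.mono_set sub4) iFG3a
      have hnn : 0 ≤ ∫ t in H.b..F.b, lpNorm r p (fun i => F.f t i - G.f t i) :=
        intervalIntegral.integral_nonneg hb1 (fun t _ => lpNorm_nonneg _ _ _)
      have : S3 = ∫ t in G.a..F.b, lpNorm r p (fun i => F.f t i - G.f t i) := rfl
      rw [this, ← hsplit]; linarith
    linarith
  -- abbreviations for temporal and cutoff quantities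
  have hrnn : (0:ℝ) ≤ (r:ℝ) ^ (1/p) := by positivity
  set ρ : ℝ := (r : ℝ) ^ (1/p) with hρ
  set A1 : ℝ := cS * ((G.a - H.a) + (G.b - H.b)) with hA1
  set A2 : ℝ := cS * ((F.a - H.a) + (F.b - H.b)) with hA2
  set A3 : ℝ := cS * ((G.a - F.a) + (G.b - F.b)) with hA3
  set C1 : ℝ := 2 * cS * (H.b - G.a) with hC1
  set C2 : ℝ := 2 * cS * (H.b - F.a) with hC2
  set C3 : ℝ := 2 * cS * (F.b - G.a) with hC3
  have hA1nn : 0 ≤ A1 := by rw [hA1]; exact mul_nonneg hcS.le (by linarith)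
  have hA2nn : 0 ≤ A2 := by rw [hA2]; exact mul_nonneg hcS.le (by linarith)
  have hA3nn : 0 ≤ A3 := by rw [hA3]; exact mul_nonneg hcS.le (by linarith)
  have hC1nn : 0 ≤ C1 := by rw [hC1]; exact mul_nonneg (by positivity) (by linarith)
  have hC2nn : 0 ≤ C2 := by rw [hC2]; exact mul_nonneg (by positivity) (by linarith)
  have hC3nn : 0 ≤ C3 := by rw [hC3]; exact mul_nonneg (by positivity) (by linarith)
  -- rewrite each dC value
  have e1 : dC r p cS H G = ((ρ * A1) ^ p + (min S1 (ρ * C1)) ^ p) ^ (1/p) := by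
    unfold dC
    rw [max_eq_right (ha1.trans ha2), min_eq_left (hb1.trans hb2),
      abs_sub_comm H.a G.a, abs_sub_comm H.b G.b,
      abs_of_nonneg (by linarith : (0:ℝ) ≤ G.a - H.a),
      abs_of_nonneg (by linarith : (0:ℝ) ≤ G.b - H.b),
      ← hA1, ← hC1, ← hS1, ← root_pow p hp r hA1nn, ← root_pow p hp r hC1nn, ← hρ,
      ← min_rpow p hp hS1nn (mul_nonneg hrnn hC1nn)]
  have e2 : dC r p cS F H = ((ρ * A2) ^ p + (min S2 (ρ * C2)) ^ p) ^ (1/p) := by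
    unfold dC
    rw [max_eq_left ha1, min_eq_right hb1,
      abs_of_nonneg (by linarith : (0:ℝ) ≤ F.a - H.a),
      abs_of_nonneg (by linarith : (0:ℝ) ≤ F.b - H.b),
      ← hA2, ← hC2, ← hS2, ← root_pow p hp r hA2nn, ← root_pow p hp r hC2nn, ← hρ,
      ← min_rpow p hp hS2nn (mul_nonneg hrnn hC2nn)]
  have e3 : dC r p cS F G = ((ρ * A3) ^ p + (min S3 (ρ * C3)) ^ p) ^ (1/p) := by
    unfold dC
    rw [max_eq_right ha2, min_eq_left hb2,
      abs_sub_comm F.a G.a, abs_sub_comm F.b G.b,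
      abs_of_nonneg (by linarith : (0:ℝ) ≤ G.a - F.a),
      abs_of_nonneg (by linarith : (0:ℝ) ≤ G.b - F.b),
      ← hA3, ← hC3, ← hS3, ← root_pow p hp r hA3nn, ← root_pow p hp r hC3nn, ← hρ,
      ← min_rpow p hp hS3nn (mul_nonneg hrnn hC3nn)]
  rw [e1, e2, e3]
  have hmin1 : 0 ≤ min S1 (ρ * C1) := le_min hS1nn (mul_nonneg hrnn hC1nn)
  have hmin2 : 0 ≤ min S2 (ρ * C2) := le_min hS2nn (mul_nonneg hrnn hC2nn)
  have hmin3 : 0 ≤ min S3 (ρ * C3) := le_min hS3nn (mul_nonneg hrnn hC3nn)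
  refine two_point_minkowski p hp (mul_nonneg hrnn hA1nn) hmin1 (mul_nonneg hrnn hA2nn)
    hmin2 (mul_nonneg hrnn hA3nn) hmin3 ?_ ?_
  · have : A1 = A2 + A3 := by rw [hA1, hA2, hA3]; ring
    rw [this, mul_add]
  · have hD12 : ρ * C1 ≤ ρ * C2 := by
      refine mul_le_mul_of_nonneg_left ?_ hrnn
      rw [hC1, hC2]
      exact mul_le_mul_of_nonneg_left (by linarith) (by positivity)
    have hD13 : ρ * C1 ≤ ρ * C3 := by
      refine mul_le_mul_of_nonneg_left ?_ hrnn
      rw [hC1, hC3]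
      exact mul_le_mul_of_nonneg_left (by linarith) (by positivity)
    rcases le_total S2 (ρ * C2) with h2 | h2
    · rcases le_total S3 (ρ * C3) with h3 | h3
      · rw [min_eq_left h2, min_eq_left h3]
        exact (min_le_left _ _).trans key
      · rw [min_eq_right h3]
        exact le_add_of_nonneg_of_le hmin2 ((min_le_right _ _).trans hD13)
    · rw [min_eq_right h2]
      exact le_add_of_le_of_nonneg ((min_le_right _ _).trans hD12) hmin3
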